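/- arXiv:math/0007180 — 4 statements merged into one kernel-verified Lean document; each statement's English description precedes it below -/
import Mathlib

section
/- For every natural n ≥ 1 and real y, Σ_{k=0}^{n-1} g_{n,k}(y)^2 = (1/n) Σ_{l=0}^{n-1} exp(2y cos(2πl/n)). -/
open scoped Nat Real

set_option maxHeartbeats 1000000

/-- The polar n-dimensional cosexponential function. -/
noncomputable def g (n k : ℕ) (y : ℝ) : ℝ :=
  ∑' p : ℕ, y ^ (k + p * n) / (k + p * n)!

namespace SumSqCosexpAux

open Complex Finset

noncomputable def F (y : ℝ) (a : ℕ) : ℝ := y ^ a / a !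

noncomputable def Fc (y : ℝ) (a : ℕ) : ℂ := (y:ℂ) ^ a / a !

lemma ofReal_F (y : ℝ) (a : ℕ) : ((F y a : ℝ) : ℂ) = Fc y a := by
  simp [F, Fc]

lemma summable_normF (y : ℝ) : Summable (fun a : ℕ => ‖F y a‖) := by
  refine (Real.summable_pow_div_factorial |y|).congr fun a => ?_
  simp [F, Real.norm_eq_abs, abs_div, _root_.abs_pow, Nat.abs_cast]

lemma abs_Fc (y : ℝ) (a : ℕ) : ‖Fc y a‖ = ‖F y a‖ := by
  simp [Fc, F, norm_div, norm_pow, Complex.norm_real, Complex.norm_natCast,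
    Real.norm_eq_abs, abs_div, _root_.abs_pow, Nat.abs_cast]

lemma summable_normFF (y : ℝ) :
    Summable (fun ab : ℕ × ℕ => ‖F y ab.1‖ * ‖F y ab.2‖) := by
  have h : Summable (fun a : ℕ => ‖(‖F y a‖)‖) := by simpa using summable_normF y
  exact summable_mul_of_summable_norm h h

lemma exp_tsum (w : ℂ) : Complex.exp w = ∑' a : ℕ, w ^ a / a ! := by
  rw [Complex.exp_eq_exp_ℂ, NormedSpace.exp_eq_tsum_div]

lemma summable_norm_exp_mul (y θ : ℝ) :
    Summable (fun a : ℕ => ‖((y:ℂ) * Complex.exp (θ * I)) ^ a / (a ! : ℂ)‖) := by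
  refine (Real.summable_pow_div_factorial |y|).congr fun a => ?_
  simp only [norm_div, norm_pow, norm_mul, Complex.norm_exp_ofReal_mul_I,
    Complex.norm_real, Real.norm_eq_abs, mul_one, Complex.norm_natCast]

/-- The summand on the complex side. -/
noncomputable def T (n : ℕ) (y : ℝ) (l : ℕ) (ab : ℕ × ℕ) : ℂ :=
  Fc y ab.1 * Fc y ab.2 * Complex.exp (2 * π * I * ((ab.1:ℤ) - (ab.2:ℤ)) * l / n)

lemma summable_T (n : ℕ) (y : ℝ) (l : ℕ) : Summable (T n y l) := by
  refine Summable.of_norm_bounded (summable_normFF y) fun ab => le_of_eq ?_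
  obtain ⟨a, b⟩ := ab
  have harg : (2 * (π:ℂ) * I * ((a:ℤ) - (b:ℤ)) * l / n) =
      ((2 * π * (a - b : ℤ) * l / n : ℝ) : ℂ) * I := by
    push_cast; ring
  simp only [T, norm_mul, harg, Complex.norm_exp_ofReal_mul_I, mul_one,
    abs_Fc]

lemma claimA (n : ℕ) (hn : 1 ≤ n) (y : ℝ) (l : ℕ) :
    (Real.exp (2 * y * Real.cos (2 * π * l / n)) : ℂ) = ∑' ab : ℕ × ℕ, T n y l ab := by
  set θ : ℝ := 2 * π * l / n with hθ
  have h1 : (Real.exp (2 * y * Real.cos θ) : ℂ) =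
      Complex.exp ((y:ℂ) * Complex.exp (θ * I)) * Complex.exp ((y:ℂ) * Complex.exp (-θ * I)) := by
    rw [← Complex.exp_add, Complex.ofReal_exp]
    congr 1
    push_cast
    rw [Complex.cos]
    ring
  have h2 := exp_tsum ((y:ℂ) * Complex.exp (θ * I))
  have h3 := exp_tsum ((y:ℂ) * Complex.exp (-θ * I))
  rw [h1, h2, h3,
    tsum_mul_tsum_of_summable_norm (summable_norm_exp_mul y θ)
      (by simpa using summable_norm_exp_mul y (-θ))]
  refine tsum_congr fun ab => ?_
  obtain ⟨a, b⟩ := ab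
  simp only [T, Fc]
  rw [mul_pow, mul_pow, ← Complex.exp_nat_mul, ← Complex.exp_nat_mul]
  rw [div_mul_div_comm, mul_mul_mul_comm, ← Complex.exp_add]
  have harg : (a:ℂ) * (θ * I) + (b:ℂ) * (-θ * I) = 2 * π * I * ((a:ℤ) - (b:ℤ)) * l / n := by
    have hn0 : (n:ℂ) ≠ 0 := Nat.cast_ne_zero.mpr (by omega)
    rw [hθ]
    push_cast
    field_simp
    ring
  rw [harg]
  ring

lemma geom (n : ℕ) (hn : 1 ≤ n) (m : ℤ) :
    ∑ l ∈ range n, Complex.exp (2 * π * I * m * l / n) = if (n:ℤ) ∣ m then (n:ℂ) else 0 := by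
  have hn0 : (n:ℂ) ≠ 0 := Nat.cast_ne_zero.mpr (by omega)
  set w : ℂ := Complex.exp (2 * π * I * m / n) with hw
  have hwl : ∀ l : ℕ, Complex.exp (2 * π * I * m * l / n) = w ^ l := by
    intro l
    rw [hw, ← Complex.exp_nat_mul]
    ring_nf
  simp_rw [hwl]
  split_ifs with hd
  · obtain ⟨c, rfl⟩ := hd
    have hwone : w = 1 := by
      rw [hw]
      have : 2 * π * I * (((n:ℤ) * c : ℤ) : ℂ) / n = c * (2 * π * I) := by
        push_cast
        field_simp
      rw [this, Complex.exp_int_mul_two_pi_mul_I]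
    simp [hwone]
  · have hw1 : w ≠ 1 := by
      intro h
      rw [hw, Complex.exp_eq_one_iff] at h
      obtain ⟨k, hk⟩ := h
      apply hd
      refine ⟨k, ?_⟩
      have h2 : (2 * (π:ℂ) * I) ≠ 0 :=
        mul_ne_zero (mul_ne_zero two_ne_zero (Complex.ofReal_ne_zero.2 Real.pi_ne_zero)) I_ne_zero
      have : (m : ℂ) = n * k := by
        field_simp at hk
        have h3 : 2 * (π:ℂ) * I * m = 2 * (π:ℂ) * I * (n * k) := by rw [hk]
        exact mul_left_cancel₀ h2 h3
      exact_mod_cast this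
    have hwn : w ^ n = 1 := by
      rw [hw, ← Complex.exp_nat_mul]
      have : (n:ℂ) * (2 * π * I * m / n) = m * (2 * π * I) := by field_simp
      rw [this, Complex.exp_int_mul_two_pi_mul_I]
    rw [geom_sum_eq hw1, hwn]
    simp

/-- The common value, as a real tsum. -/
noncomputable def H (n : ℕ) (y : ℝ) (ab : ℕ × ℕ) : ℝ :=
  if ab.1 % n = ab.2 % n then F y ab.1 * F y ab.2 else 0

lemma summable_H (n : ℕ) (y : ℝ) : Summable (H n y) := by
  refine Summable.of_norm_bounded (summable_normFF y) fun ab => ?_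
  rw [H]
  split_ifs
  · rw [norm_mul]
  · simp only [norm_zero]
    positivity

lemma sum_T (n : ℕ) (hn : 1 ≤ n) (y : ℝ) (ab : ℕ × ℕ) :
    ∑ l ∈ range n, T n y l ab = (n:ℂ) * ((H n y ab : ℝ) : ℂ) := by
  obtain ⟨a, b⟩ := ab
  have hcond : ((n:ℤ) ∣ (a:ℤ) - (b:ℤ)) ↔ a % n = b % n := by
    rw [dvd_sub_comm]
    exact (Nat.modEq_iff_dvd (n := n)).symm
  simp only [T]
  rw [show ((a:ℤ):ℂ) - ((b:ℤ):ℂ) = ((((a:ℤ) - (b:ℤ)) : ℤ) : ℂ) by push_cast; ring]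
  rw [← Finset.mul_sum, geom n hn ((a:ℤ) - (b:ℤ))]
  by_cases h : a % n = b % n
  · rw [if_pos (hcond.mpr h)]
    simp only [H, if_pos h]
    push_cast [ofReal_F]
    ring
  · rw [if_neg (fun hd => h (hcond.mp hd))]
    simp [H, h]

/-- Right-hand side identity. -/
lemma rhs_eq (n : ℕ) (hn : 1 ≤ n) (y : ℝ) :
    ∑ l ∈ range n, Real.exp (2 * y * Real.cos (2 * π * l / n)) =
      n * ∑' ab : ℕ × ℕ, H n y ab := by
  have hmain : ((∑ l ∈ range n, Real.exp (2 * y * Real.cos (2 * π * l / n)) : ℝ) : ℂ)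
      = ((n * ∑' ab : ℕ × ℕ, H n y ab : ℝ) : ℂ) := by
    rw [Complex.ofReal_sum]
    calc ∑ l ∈ range n, ((Real.exp (2 * y * Real.cos (2 * π * l / n)) : ℝ) : ℂ)
        = ∑ l ∈ range n, ∑' ab : ℕ × ℕ, T n y l ab := by
          exact Finset.sum_congr rfl fun l _ => claimA n hn y l
      _ = ∑' ab : ℕ × ℕ, ∑ l ∈ range n, T n y l ab := by
          exact (Summable.tsum_finsetSum fun l _ => summable_T n y l).symm
      _ = ∑' ab : ℕ × ℕ, (n : ℂ) * ((H n y ab : ℝ) : ℂ) := by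
          exact tsum_congr fun ab => sum_T n hn y ab
      _ = (n:ℂ) * ∑' ab : ℕ × ℕ, ((H n y ab : ℝ) : ℂ) := tsum_mul_left
      _ = ((n * ∑' ab : ℕ × ℕ, H n y ab : ℝ) : ℂ) := by
          rw [Complex.ofReal_mul, Complex.ofReal_natCast, Complex.ofReal_tsum]
  exact_mod_cast hmain

noncomputable def Hk (n k : ℕ) (y : ℝ) (ab : ℕ × ℕ) : ℝ :=
  if ab.1 % n = k ∧ ab.2 % n = k then F y ab.1 * F y ab.2 else 0

lemma summable_Hk (n k : ℕ) (y : ℝ) : Summable (Hk n k y) := by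
  refine Summable.of_norm_bounded (summable_normFF y) fun ab => ?_
  rw [Hk]
  split_ifs
  · rw [norm_mul]
  · simp only [norm_zero]
    positivity

lemma g_sq (n k : ℕ) (hn : 1 ≤ n) (hk : k < n) (y : ℝ) :
    (g n k y) ^ 2 = ∑' ab : ℕ × ℕ, Hk n k y ab := by
  have hg : g n k y = ∑' p : ℕ, F y (k + p * n) := rfl
  have hinj : Function.Injective (fun p : ℕ => k + p * n) := by
    intro p q h
    simp only at h
    exact Nat.eq_of_mul_eq_mul_right (by omega) (Nat.add_left_cancel h)
  have hsum : Summable (fun p : ℕ => ‖F y (k + p * n)‖) :=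
    (summable_normF y).comp_injective hinj
  rw [hg, sq, tsum_mul_tsum_of_summable_norm hsum hsum]
  have he : Function.Injective (fun pq : ℕ × ℕ => ((k + pq.1 * n, k + pq.2 * n) : ℕ × ℕ)) := by
    intro pq pq' h
    simp only [Prod.mk.injEq] at h
    exact Prod.ext (hinj h.1) (hinj h.2)
  have hmod : ∀ p : ℕ, (k + p * n) % n = k := by
    intro p
    rw [Nat.add_mul_mod_self_right, Nat.mod_eq_of_lt hk]
  have hsupp : Function.support (Hk n k y) ⊆
      Set.range (fun pq : ℕ × ℕ => ((k + pq.1 * n, k + pq.2 * n) : ℕ × ℕ)) := by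
    intro ab hab
    obtain ⟨a, b⟩ := ab
    have hcond : a % n = k ∧ b % n = k := by
      by_contra h
      exact hab (if_neg h)
    refine ⟨(a / n, b / n), ?_⟩
    simp only [Prod.mk.injEq]
    constructor
    · calc k + a / n * n = a % n + a / n * n := by rw [hcond.1]
        _ = a := Nat.mod_add_div' a n
    · calc k + b / n * n = b % n + b / n * n := by rw [hcond.2]
        _ = b := Nat.mod_add_div' b n
  have := Function.Injective.tsum_eq he (f := Hk n k y) hsupp
  rw [← this]
  refine tsum_congr fun pq => ?_
  simp only [Hk, hmod, and_self, if_true]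

lemma sum_Hk (n : ℕ) (hn : 1 ≤ n) (y : ℝ) (ab : ℕ × ℕ) :
    ∑ k ∈ range n, Hk n k y ab = H n y ab := by
  obtain ⟨a, b⟩ := ab
  rw [Finset.sum_eq_single (a % n)]
  · by_cases h : a % n = b % n
    · have hb : b % n = a % n := h.symm
      simp [Hk, H, hb]
    · have hb : ¬(b % n = a % n) := fun hc => h hc.symm
      simp [Hk, H, hb, h]
  · intro k _ hk
    exact if_neg (fun hc => hk hc.1.symm)
  · intro h
    exact absurd (Finset.mem_range.mpr (Nat.mod_lt _ (by omega))) h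

lemma lhs_eq (n : ℕ) (hn : 1 ≤ n) (y : ℝ) :
    ∑ k ∈ range n, (g n k y) ^ 2 = ∑' ab : ℕ × ℕ, H n y ab := by
  calc ∑ k ∈ range n, (g n k y) ^ 2
      = ∑ k ∈ range n, ∑' ab : ℕ × ℕ, Hk n k y ab := by
        exact Finset.sum_congr rfl fun k hk => g_sq n k hn (Finset.mem_range.mp hk) y
    _ = ∑' ab : ℕ × ℕ, ∑ k ∈ range n, Hk n k y ab :=
        (Summable.tsum_finsetSum fun k _ => summable_Hk n k y).symm
    _ = ∑' ab : ℕ × ℕ, H n y ab := tsum_congr fun ab => sum_Hk n hn y ab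

end SumSqCosexpAux

theorem sum_sq_cosexp (n : ℕ) (hn : 1 ≤ n) (y : ℝ) :
    ∑ k ∈ Finset.range n, (g n k y) ^ 2 =
      (1 / n) * ∑ l ∈ Finset.range n, Real.exp (2 * y * Real.cos (2 * π * l / n)) := by
  rw [SumSqCosexpAux.lhs_eq n hn y, SumSqCosexpAux.rhs_eq n hn y]
  have hn0 : (n:ℝ) ≠ 0 := Nat.cast_ne_zero.mpr (by omega)
  field_simp
end

section
/- For every natural n ≥ 1, 0 ≤ k ≤ n-1, and real y, f_{n,k}(y) = (1/n) Σ_{l=1}^{n} exp(y cos(π(2l-1)/n)) · cos(y sin(π(2l-1)/n) - π(2l-1)k/n). -/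
open scoped Nat Real

/-- The planar n-dimensional cosexponential function. -/
noncomputable def f (n k : ℕ) (y : ℝ) : ℝ :=
  ∑' p : ℕ, (-1 : ℝ) ^ p * y ^ (k + p * n) / (k + p * n)!

open Complex Finset

/-- Reindex the sum over Icc 1 n to a geometric-style sum over range n. -/
lemma sum_odd_pow (n : ℕ) (c : ℝ) :
    ∑ l ∈ Finset.Icc 1 n, Complex.exp (((2 * (l : ℝ) - 1) * c : ℝ) * I)
      = ∑ i ∈ Finset.range n, Complex.exp ((c : ℝ) * I) ^ (2 * i + 1) := by
  rw [← Finset.Ico_add_one_right_eq_Icc, Finset.sum_Ico_eq_sum_range]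
  have h : n + 1 - 1 = n := rfl
  rw [h]
  refine Finset.sum_congr rfl fun i _ => ?_
  rw [← Complex.exp_nat_mul]
  congr 1
  push_cast
  ring

/-- Divisible case: the roots-of-(-1) sum with exponent a multiple gives n * (-1)^p. -/
lemma sumA (n p : ℕ) :
    ∑ l ∈ Finset.Icc 1 n, Complex.exp (((2 * (l : ℝ) - 1) * (π * p) : ℝ) * I)
      = (n : ℂ) * (-1) ^ p := by
  rw [sum_odd_pow]
  have h1 : Complex.exp ((π * p : ℝ) * I) = (-1 : ℂ) ^ p := by
    rw [show ((π * p : ℝ) : ℂ) * I = p * (π * I) by push_cast; ring,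
      Complex.exp_nat_mul, Complex.exp_pi_mul_I]
  rw [h1]
  have h2 : ∀ i : ℕ, ((-1 : ℂ) ^ p) ^ (2 * i + 1) = (-1 : ℂ) ^ p := by
    intro i
    rw [← pow_mul, mul_comm p (2 * i + 1), pow_mul, Odd.neg_one_pow ⟨i, by ring⟩]
  simp only [h2, Finset.sum_const, Finset.card_range, nsmul_eq_mul]

/-- Non-divisible case: the roots sum vanishes. -/
lemma sumB (n : ℕ) (hn : 1 ≤ n) (j : ℤ) (hj : ¬ (n : ℤ) ∣ j) :
    ∑ l ∈ Finset.Icc 1 n, Complex.exp (((2 * (l : ℝ) - 1) * (π * j / n) : ℝ) * I) = 0 := by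
  have hn0 : (n : ℝ) ≠ 0 := by positivity
  have hn0c : (n : ℂ) ≠ 0 := by exact_mod_cast Nat.cast_ne_zero.mpr (by omega)
  rw [sum_odd_pow]
  set w : ℂ := Complex.exp ((π * j / n : ℝ) * I) with hw
  have hterm : ∀ i : ℕ, w ^ (2 * i + 1) = w * (w ^ 2) ^ i := by
    intro i; rw [← pow_mul, pow_succ, mul_comm]
  simp only [hterm, ← Finset.mul_sum]
  have hw2 : w ^ 2 = Complex.exp ((2 * π * j / n : ℝ) * I) := by
    rw [hw, ← Complex.exp_nat_mul]
    congr 1; push_cast; ring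
  have hne : w ^ 2 ≠ 1 := by
    rw [hw2]
    intro heq
    rw [Complex.exp_eq_one_iff] at heq
    obtain ⟨t, ht⟩ := heq
    apply hj
    have h2 : (2 * π * j / n : ℝ) = t * (2 * π) := by
      have him := congrArg Complex.im ht
      simpa using him
    have hπ2 : (2 * π : ℝ) ≠ 0 := by positivity
    have h4 : (2 * π * j : ℝ) = t * (2 * π) * n := by
      field_simp at h2
      linear_combination (2 * π) * h2
    have h5 : (2 * π : ℝ) * (j : ℝ) = (2 * π) * ((n : ℝ) * t) := by linear_combination h4
    have hjt := mul_left_cancel₀ hπ2 h5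
    exact ⟨t, by exact_mod_cast hjt⟩
  rw [geom_sum_eq hne]
  have hpow : (w ^ 2) ^ n = 1 := by
    rw [hw2, ← Complex.exp_nat_mul, show (n : ℂ) * (((2 * π * j / n : ℝ) : ℂ) * I)
        = j * (2 * π * I) by push_cast; field_simp, Complex.exp_int_mul_two_pi_mul_I]
  rw [hpow]
  simp

/-- The complex summand. -/
noncomputable def gAux (n k : ℕ) (y : ℝ) (l m : ℕ) : ℂ :=
  (y : ℂ) ^ m / m ! * Complex.exp (((2 * (l : ℝ) - 1) * (π * ((m : ℝ) - k) / n) : ℝ) * I)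

lemma gAux_summable (n k : ℕ) (y : ℝ) (l : ℕ) : Summable (gAux n k y l) := by
  apply Summable.of_norm
  have h : ∀ m : ℕ, ‖gAux n k y l m‖ = |y| ^ m / m ! := by
    intro m
    rw [gAux, norm_mul, Complex.norm_exp_ofReal_mul_I,
      mul_one, norm_div, norm_pow]
    simp
  simpa [h] using Real.summable_pow_div_factorial |y|

lemma term_eq (y a t c : ℝ) (m : ℕ) (h : a + m * t = c) :
    Complex.exp ((a : ℝ) * I) * ((((y : ℝ) : ℂ) * Complex.exp ((t : ℝ) * I)) ^ m / (m ! : ℂ))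
      = (y : ℂ) ^ m / m ! * Complex.exp ((c : ℝ) * I) := by
  have h1 : Complex.exp ((a : ℝ) * I) * Complex.exp ((m : ℂ) * (((t : ℝ) : ℂ) * I))
      = Complex.exp ((c : ℝ) * I) := by
    rw [← Complex.exp_add]
    congr 1
    rw [← h]
    push_cast
    ring
  rw [mul_pow, ← Complex.exp_nat_mul, ← h1]
  ring

lemma gAux_tsum (n k : ℕ) (hn : 1 ≤ n) (y : ℝ) (l : ℕ) :
    Complex.exp ((-(k * (π * (2 * (l : ℝ) - 1) / n)) : ℝ) * I) *
      Complex.exp ((y : ℝ) * Complex.exp ((π * (2 * (l : ℝ) - 1) / n : ℝ) * I))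
      = ∑' m : ℕ, gAux n k y l m := by
  have hn0 : (n : ℝ) ≠ 0 := by positivity
  have hexp : ∀ z : ℂ, Complex.exp z = ∑' m : ℕ, z ^ m / m ! := by
    intro z
    rw [Complex.exp_eq_exp_ℂ, NormedSpace.exp_eq_tsum_div]
  rw [hexp (((y : ℝ) : ℂ) * Complex.exp ((π * (2 * (l : ℝ) - 1) / n : ℝ) * I)),
    ← tsum_mul_left]
  refine tsum_congr fun m => ?_
  rw [gAux]
  exact term_eq y _ _ _ m (by field_simp; ring)

/-- The inner finite sum. -/
noncomputable def GAux (n k : ℕ) (y : ℝ) (m : ℕ) : ℂ :=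
  ∑ l ∈ Finset.Icc 1 n, gAux n k y l m

lemma GAux_zero (n k : ℕ) (hn : 1 ≤ n) (hk : k < n) (y : ℝ) (m : ℕ)
    (hm : ¬ ∃ p : ℕ, m = k + p * n) : GAux n k y m = 0 := by
  have hn0 : (n : ℝ) ≠ 0 := by positivity
  have hnd : ¬ ((n : ℤ) ∣ ((m : ℤ) - k)) := by
    intro hdvd
    rcases le_or_gt k m with h | h
    · have h1 : (n : ℤ) ∣ ((m - k : ℕ) : ℤ) := by
        rwa [Nat.cast_sub h]
      have hd : n ∣ (m - k) := by exact_mod_cast h1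
      obtain ⟨p, hp⟩ := hd
      refine hm ⟨p, ?_⟩
      rw [mul_comm p n]
      omega
    · have h1 : (n : ℤ) ∣ ((k - m : ℕ) : ℤ) := by
        rw [Nat.cast_sub h.le, show ((k : ℤ) - m) = -((m : ℤ) - k) by ring]
        exact dvd_neg.mpr hdvd
      have hd : n ∣ (k - m) := by exact_mod_cast h1
      have := Nat.le_of_dvd (by omega) hd
      omega
  have harg : ∀ l : ℕ, gAux n k y l m = (y : ℂ) ^ m / m ! *
      Complex.exp (((2 * (l : ℝ) - 1) * (π * (((m : ℤ) - k : ℤ) : ℝ) / n) : ℝ) * I) := by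
    intro l
    rw [gAux]
    norm_num
  rw [GAux, Finset.sum_congr rfl (fun l _ => harg l), ← Finset.mul_sum, sumB n hn _ hnd,
    mul_zero]

lemma GAux_val (n k : ℕ) (hn : 1 ≤ n) (y : ℝ) (p : ℕ) :
    GAux n k y (k + p * n) =
      (n : ℂ) * (((-1 : ℝ) ^ p * y ^ (k + p * n) / (k + p * n)! : ℝ) : ℂ) := by
  have hn0 : (n : ℝ) ≠ 0 := by positivity
  have hn0c : (n : ℂ) ≠ 0 := Nat.cast_ne_zero.mpr (by omega)
  have harg : ∀ l : ℕ, gAux n k y l (k + p * n) = (y : ℂ) ^ (k + p * n) / (k + p * n)! *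
      Complex.exp (((2 * (l : ℝ) - 1) * (π * p) : ℝ) * I) := by
    intro l
    rw [gAux]
    congr 2
    push_cast
    field_simp
    ring
  rw [GAux, Finset.sum_congr rfl (fun l _ => harg l), ← Finset.mul_sum, sumA n p]
  push_cast
  ring

theorem planar_cosexp_closed_form (n : ℕ) (hn : 1 ≤ n) (k : ℕ) (hk : k ≤ n - 1) (y : ℝ) :
    f n k y = (1 / n) * ∑ l ∈ Finset.Icc 1 n,
      Real.exp (y * Real.cos (π * (2 * l - 1) / n)) *
        Real.cos (y * Real.sin (π * (2 * l - 1) / n) - π * (2 * l - 1) * k / n) := by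
  have hn0 : (n : ℝ) ≠ 0 := by positivity
  have hkn : k < n := by omega
  -- Step 2: the swapped tsum filters down to f
  have hfilter : ∑' m : ℕ, GAux n k y m = (n : ℂ) * (f n k y : ℂ) := by
    have hinj : Function.Injective (fun p : ℕ => k + p * n) := by
      intro a b hab
      have hab' : k + a * n = k + b * n := hab
      have h2 : a * n = b * n := Nat.add_left_cancel hab'
      exact Nat.eq_of_mul_eq_mul_right (by omega) h2
    have hsupp : Function.support (GAux n k y) ⊆ Set.range (fun p : ℕ => k + p * n) := by
      intro m hm
      by_contra hr
      apply hm
      apply GAux_zero n k hn hkn y m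
      rintro ⟨p, hp⟩
      exact hr ⟨p, hp.symm⟩
    calc ∑' m, GAux n k y m = ∑' p : ℕ, GAux n k y (k + p * n) :=
        (Function.Injective.tsum_eq hinj hsupp).symm
    _ = (n : ℂ) * ∑' p : ℕ, (((-1 : ℝ) ^ p * y ^ (k + p * n) / (k + p * n)! : ℝ) : ℂ) := by
        rw [← tsum_mul_left]; exact tsum_congr fun p => GAux_val n k hn y p
    _ = (n : ℂ) * (f n k y : ℂ) := by
        rw [f, Complex.ofReal_tsum]
  -- Step 3: combine
  have hmain : ∑ l ∈ Finset.Icc 1 n,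
      Complex.exp ((-(k * (π * (2 * (l : ℝ) - 1) / n)) : ℝ) * I) *
        Complex.exp ((y : ℝ) * Complex.exp ((π * (2 * (l : ℝ) - 1) / n : ℝ) * I))
      = (n : ℂ) * (f n k y : ℂ) := by
    rw [Finset.sum_congr rfl (fun l _ => gAux_tsum n k hn y l), ← hfilter]
    simp only [GAux]
    rw [Summable.tsum_finsetSum (fun l _ => gAux_summable n k y l)]
  -- take real parts
  have hre : ∀ a t : ℝ,
      (Complex.exp ((a : ℝ) * I) * Complex.exp ((y : ℝ) * Complex.exp ((t : ℝ) * I))).re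
        = Real.exp (y * Real.cos t) * Real.cos (y * Real.sin t + a) := by
    intro a t
    rw [← Complex.exp_add, Complex.exp_re]
    congr 2
    · simp [Complex.exp_ofReal_mul_I_re]
    · simp [Complex.exp_ofReal_mul_I_im, Complex.exp_ofReal_mul_I_re]
      ring
  have hthis := congrArg Complex.re hmain
  rw [Complex.re_sum] at hthis
  have hlhs : ∀ l ∈ Finset.Icc 1 n,
      (Complex.exp ((-(k * (π * (2 * (l : ℝ) - 1) / n)) : ℝ) * I) *
        Complex.exp ((y : ℝ) * Complex.exp ((π * (2 * (l : ℝ) - 1) / n : ℝ) * I))).re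
      = Real.exp (y * Real.cos (π * (2 * (l : ℝ) - 1) / n)) *
        Real.cos (y * Real.sin (π * (2 * (l : ℝ) - 1) / n) - π * (2 * (l : ℝ) - 1) * k / n) := by
    intro l _
    rw [hre (-(k * (π * (2 * (l : ℝ) - 1) / n))) (π * (2 * (l : ℝ) - 1) / n)]
    congr 1
    ring_nf
  rw [Finset.sum_congr rfl hlhs] at hthis
  simp only [Complex.mul_re, Complex.natCast_re, Complex.ofReal_re, Complex.natCast_im,
    Complex.ofReal_im, mul_zero, zero_mul, sub_zero] at hthis
  rw [hthis]
  field_simp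
end

section
/- For every natural n ≥ 1 and real y, Σ_{k=0}^{n-1} f_{n,k}(y)^2 = (1/n) Σ_{l=1}^{n} exp(2y cos(π(2l-1)/n)). -/
open scoped Nat Real

lemma f_key (n : ℕ) (hn : 1 ≤ n) (y : ℝ) (ω : ℂ) (hω : ω ^ n = -1) :
    ∑ k ∈ Finset.range n, ω ^ k * (f n k y : ℂ) = Complex.exp (y * ω) := by
  haveI : NeZero n := ⟨by omega⟩
  set g : ℕ → ℂ := fun m => ((y : ℂ) * ω) ^ m / m ! with hg
  have hsum : Summable g := NormedSpace.expSeries_div_summable _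
  have hexp : Complex.exp ((y : ℂ) * ω) = ∑' m, g m := by
    rw [Complex.exp_eq_exp_ℂ, NormedSpace.exp_eq_tsum_div]
  rw [hexp]
  let e : Fin n × ℕ ≃ ℕ := ((Nat.divModEquiv n).trans (Equiv.prodComm _ _)).symm
  have he : ∀ k : Fin n, ∀ p : ℕ, e (k, p) = p * n + (k : ℕ) := by
    intro k p; rfl
  have h1 : ∑' m, g m = ∑' q : Fin n × ℕ, g (e q) := (e.tsum_eq g).symm
  have hsum2 : Summable (fun q : Fin n × ℕ => g (e q)) := hsum.comp_injective e.injective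
  have hfib : ∀ k : Fin n, Summable (fun p : ℕ => g (p * n + (k : ℕ))) := by
    intro k
    exact hsum.comp_injective (fun p q h => by
      simpa using Nat.eq_of_mul_eq_mul_right (by omega) (by omega : p * n = q * n))
  rw [h1, Summable.tsum_prod' hsum2 (fun k => by simpa only [he] using hfib k), tsum_fintype]
  rw [← Fin.sum_univ_eq_sum_range (fun k => ω ^ k * (f n k y : ℂ)) n]
  refine Finset.sum_congr rfl fun k _ => ?_
  simp only [he]
  have hf : (f n k y : ℂ) = ∑' p : ℕ, ((-1 : ℂ) ^ p * (y : ℂ) ^ ((k : ℕ) + p * n) / ((k : ℕ) + p * n)!) := by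
    rw [f, Complex.ofReal_tsum]
    push_cast
    rfl
  rw [hf, ← tsum_mul_left]
  refine tsum_congr fun p => ?_
  have harith : p * n + (k : ℕ) = (k : ℕ) + p * n := by omega
  rw [hg]
  have hωp : ω ^ (p * n) = (-1 : ℂ) ^ p := by rw [mul_comm, pow_mul, hω]
  simp only [harith, mul_pow, pow_add, hωp]
  ring

lemma orth (n : ℕ) (hn : 1 ≤ n) (d : ℤ) (hd : ¬ (n : ℤ) ∣ d) :
    ∑ l ∈ Finset.Icc 1 n, Complex.exp (π * Complex.I * (2 * l - 1) * d / n) = 0 := by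
  have hn0 : (n : ℂ) ≠ 0 := Nat.cast_ne_zero.2 (by omega)
  set c : ℂ := π * Complex.I * d / n with hc
  have hterm : ∀ l : ℕ, Complex.exp (π * Complex.I * (2 * l - 1) * d / n)
      = Complex.exp ((2 * l - 1 : ℂ) * c) := by
    intro l; congr 1; rw [hc]; ring
  have h2πI : (2 * π * Complex.I : ℂ) ≠ 0 :=
    mul_ne_zero (mul_ne_zero two_ne_zero (Complex.ofReal_ne_zero.2 Real.pi_ne_zero))
      Complex.I_ne_zero
  have hx1 : Complex.exp (2 * c) ≠ 1 := by
    intro h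
    rw [Complex.exp_eq_one_iff] at h
    obtain ⟨m, hm⟩ := h
    have h4 : (2 * π * Complex.I : ℂ) * ((d : ℂ) / n) = (2 * π * Complex.I) * m := by
      rw [hc] at hm; linear_combination hm
    have h5 : (d : ℂ) / n = m := mul_left_cancel₀ h2πI h4
    have h6 : (d : ℂ) = m * n := by field_simp at h5; exact_mod_cast h5.trans (mul_comm _ _)
    exact hd ⟨m, by rw [mul_comm]; exact_mod_cast h6⟩
  have hxn : Complex.exp (2 * c) ^ n = 1 := by
    rw [← Complex.exp_nat_mul]
    have : (n : ℂ) * (2 * c) = (d : ℤ) * (2 * π * Complex.I) := by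
      rw [hc]; field_simp
    rw [this, Complex.exp_int_mul_two_pi_mul_I]
  have hIcc : Finset.Icc 1 n = Finset.Ico 1 (n + 1) := by
    rw [Finset.Ico_add_one_right_eq_Icc]
  rw [hIcc, Finset.sum_Ico_eq_sum_range]
  have : ∀ i : ℕ, Complex.exp (π * Complex.I * (2 * (1 + i : ℕ) - 1) * d / n)
      = Complex.exp c * Complex.exp (2 * c) ^ i := by
    intro i
    rw [hterm, ← Complex.exp_nat_mul, ← Complex.exp_add]
    congr 1
    push_cast
    ring
  simp only [this]
  rw [← Finset.mul_sum]
  have hr : n + 1 - 1 = n := by omega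
  rw [hr, geom_sum_eq hx1, hxn]
  simp

theorem planar_sum_sq_cosexp (n : ℕ) (hn : 1 ≤ n) (y : ℝ) :
    ∑ k ∈ Finset.range n, (f n k y) ^ 2 =
      (1 / n) * ∑ l ∈ Finset.Icc 1 n, Real.exp (2 * y * Real.cos (π * (2 * l - 1) / n)) := by
  have hn0 : (n : ℝ) ≠ 0 := Nat.cast_ne_zero.2 (by omega)
  have hn0' : (n : ℂ) ≠ 0 := Nat.cast_ne_zero.2 (by omega)
  set θ : ℕ → ℝ := fun l => π * (2 * l - 1) / n with hθ
  set ω : ℕ → ℂ := fun l => Complex.exp ((θ l : ℝ) * Complex.I) with hω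
  have hωn : ∀ l ∈ Finset.Icc 1 n, ω l ^ n = -1 := by
    intro l hl
    rw [Finset.mem_Icc] at hl
    have harg : (n : ℂ) * (((θ l : ℝ) : ℂ) * Complex.I) = ((2 * l - 1 : ℕ) : ℂ) * (π * Complex.I) := by
      have h2l : 1 ≤ 2 * l := by omega
      push_cast [hθ, Nat.cast_sub h2l]
      field_simp
    rw [hω]
    rw [← Complex.exp_nat_mul, harg, Complex.exp_nat_mul, Complex.exp_pi_mul_I]
    exact Odd.neg_one_pow ⟨l - 1, by omega⟩
  have hconj : ∀ l : ℕ, (starRingEnd ℂ) (ω l) = Complex.exp (-((θ l : ℝ) : ℂ) * Complex.I) := by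
    intro l
    rw [hω, ← Complex.exp_conj]
    congr 1
    simp [Complex.conj_ofReal]
  have hconjn : ∀ l ∈ Finset.Icc 1 n, ((starRingEnd ℂ) (ω l)) ^ n = -1 := by
    intro l hl
    rw [← map_pow, hωn l hl]
    simp
  -- main complex identity
  have hC : ((∑ l ∈ Finset.Icc 1 n, Real.exp (2 * y * Real.cos (θ l)) : ℝ) : ℂ)
      = (n : ℂ) * ∑ k ∈ Finset.range n, ((f n k y : ℝ) : ℂ) ^ 2 := by
    rw [Complex.ofReal_sum]
    calc ∑ l ∈ Finset.Icc 1 n, ((Real.exp (2 * y * Real.cos (θ l)) : ℝ) : ℂ)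
        = ∑ l ∈ Finset.Icc 1 n,
            Complex.exp ((y : ℂ) * ω l) * Complex.exp ((y : ℂ) * (starRingEnd ℂ) (ω l)) := by
          refine Finset.sum_congr rfl fun l _ => ?_
          rw [← Complex.exp_add]
          have : (y : ℂ) * ω l + (y : ℂ) * (starRingEnd ℂ) (ω l)
              = ((2 * y * Real.cos (θ l) : ℝ) : ℂ) := by
            have h1 : ω l + (starRingEnd ℂ) (ω l) = ((2 * Real.cos (θ l) : ℝ) : ℂ) := by
              rw [Complex.add_conj, hω]
              norm_num [Complex.exp_ofReal_mul_I_re]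
            calc (y : ℂ) * ω l + (y : ℂ) * (starRingEnd ℂ) (ω l)
                = (y : ℂ) * (ω l + (starRingEnd ℂ) (ω l)) := by ring
              _ = ((2 * y * Real.cos (θ l) : ℝ) : ℂ) := by rw [h1]; push_cast; ring
          rw [this, Complex.ofReal_exp]
      _ = ∑ l ∈ Finset.Icc 1 n,
            (∑ k ∈ Finset.range n, ω l ^ k * (f n k y : ℂ)) *
            (∑ k ∈ Finset.range n, ((starRingEnd ℂ) (ω l)) ^ k * (f n k y : ℂ)) := by
          refine Finset.sum_congr rfl fun l hl => ?_
          rw [f_key n hn y (ω l) (hωn l hl), f_key n hn y _ (hconjn l hl)]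
      _ = ∑ k ∈ Finset.range n, ∑ k' ∈ Finset.range n,
            ((f n k y : ℂ) * (f n k' y : ℂ)) *
            ∑ l ∈ Finset.Icc 1 n, ω l ^ k * ((starRingEnd ℂ) (ω l)) ^ k' := by
          simp only [Finset.sum_mul_sum]
          rw [Finset.sum_comm]
          refine Finset.sum_congr rfl fun k _ => ?_
          rw [Finset.sum_comm]
          refine Finset.sum_congr rfl fun k' _ => ?_
          rw [Finset.mul_sum]
          refine Finset.sum_congr rfl fun l _ => ?_
          ring
      _ = ∑ k ∈ Finset.range n, ((f n k y : ℂ)) ^ 2 * (n : ℂ) := by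
          refine Finset.sum_congr rfl fun k hk => ?_
          rw [Finset.mem_range] at hk
          rw [Finset.sum_eq_single k]
          · have : ∑ l ∈ Finset.Icc 1 n, ω l ^ k * ((starRingEnd ℂ) (ω l)) ^ k = (n : ℂ) := by
              have h1 : ∀ l ∈ Finset.Icc 1 n, ω l ^ k * ((starRingEnd ℂ) (ω l)) ^ k = 1 := by
                intro l _
                rw [hω, hconj, ← Complex.exp_nat_mul, ← Complex.exp_nat_mul, ← Complex.exp_add]
                rw [show (k : ℂ) * (((θ l : ℝ) : ℂ) * Complex.I) + (k : ℂ) * (-((θ l : ℝ) : ℂ) * Complex.I) = 0 by ring, Complex.exp_zero]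
              rw [Finset.sum_congr rfl h1]
              simp
            rw [this]; ring
          · intro k' hk' hne
            rw [Finset.mem_range] at hk'
            have hd : ¬ (n : ℤ) ∣ ((k : ℤ) - (k' : ℤ)) := by
              intro hdvd
              have hd0 : ((k : ℤ) - (k' : ℤ)) ≠ 0 := by
                intro h; apply hne; omega
              exact absurd (Int.le_of_dvd (abs_pos.2 hd0) ((dvd_abs _ _).mpr hdvd))
                (not_le.2 (abs_lt.mpr ⟨by omega, by omega⟩))
            have h3 : ∑ l ∈ Finset.Icc 1 n, ω l ^ k * ((starRingEnd ℂ) (ω l)) ^ k' = 0 := by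
              rw [← orth n hn ((k : ℤ) - (k' : ℤ)) hd]
              refine Finset.sum_congr rfl fun l _ => ?_
              rw [hω, hconj, ← Complex.exp_nat_mul, ← Complex.exp_nat_mul, ← Complex.exp_add]
              congr 1
              rw [hθ]
              push_cast
              ring
            rw [h3, mul_zero]
          · intro h; exact absurd (Finset.mem_range.2 hk) h
      _ = (n : ℂ) * ∑ k ∈ Finset.range n, ((f n k y : ℂ)) ^ 2 := by
          rw [Finset.mul_sum]; refine Finset.sum_congr rfl fun k _ => by ring
  -- back to reals
  have hR : ∑ l ∈ Finset.Icc 1 n, Real.exp (2 * y * Real.cos (θ l))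
      = (n : ℝ) * ∑ k ∈ Finset.range n, (f n k y) ^ 2 := by
    apply Complex.ofReal_injective
    push_cast
    push_cast at hC
    exact hC
  show ∑ k ∈ Finset.range n, (f n k y) ^ 2
      = (1 / n) * ∑ l ∈ Finset.Icc 1 n, Real.exp (2 * y * Real.cos (θ l))
  rw [hR, one_div, inv_mul_cancel_left₀ hn0]
end

section
/- The planar cosexponential functions satisfy the twisted addition theorem f_{n,k}(y+z) = Σ_{j=0}^{k} f_{n,j}(y) f_{n,k-j}(z) - Σ_{j=k+1}^{n-1} f_{n,j}(y) f_{n, n+k-j}(z) for all real y, z and 0 ≤ k ≤ n-1. -/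
open scoped Nat

namespace PlanarAux

/-- Coefficient function: `c n k m` is `(-1)^(m/n)` if `m ≡ k [MOD n]`, else `0`. -/
noncomputable def c (n k m : ℕ) : ℝ := if m % n = k then (-1 : ℝ) ^ (m / n) else 0

lemma abs_c_le_one (n k m : ℕ) : |c n k m| ≤ 1 := by
  unfold c; split_ifs <;> simp [abs_pow]

lemma summable_norm (n k : ℕ) (w : ℝ) :
    Summable fun m => ‖c n k m * w ^ m / (m)!‖ := by
  refine Summable.of_nonneg_of_le (fun m => norm_nonneg _) (fun m => ?_)
    (Real.summable_pow_div_factorial |w|)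
  have h1 : (0:ℝ) ≤ ((m)! : ℝ) := by positivity
  calc ‖c n k m * w ^ m / (m)!‖ = |c n k m| * |w| ^ m / (m)! := by
        simp [Real.norm_eq_abs, abs_mul, abs_div, abs_pow, abs_of_nonneg h1]
    _ ≤ 1 * |w| ^ m / (m)! := by gcongr; exact abs_c_le_one n k m
    _ = |w| ^ m / (m)! := by rw [one_mul]

lemma summable (n k : ℕ) (w : ℝ) :
    Summable fun m => c n k m * w ^ m / (m)! :=
  (summable_norm n k w).of_norm

lemma f_eq (n k : ℕ) (hn : 0 < n) (hk : k < n) (y : ℝ) :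
    f n k y = ∑' m, c n k m * y ^ m / (m)! := by
  have hinj : Function.Injective (fun p : ℕ => k + p * n) := by
    intro p q h
    simp only at h
    have : p * n = q * n := by omega
    exact Nat.eq_of_mul_eq_mul_right hn this
  have hsupp : Function.support (fun m => c n k m * y ^ m / (m)!) ⊆
      Set.range (fun p : ℕ => k + p * n) := by
    intro m hm
    have hc : c n k m ≠ 0 := by
      intro h0
      apply hm
      simp [h0]
    have hmod : m % n = k := by
      by_contra h
      exact hc (by simp [c, h])
    have hdm := Nat.div_add_mod m n
    refine ⟨m / n, ?_⟩
    show k + m / n * n = m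
    rw [mul_comm]
    omega
  have key := hinj.tsum_eq hsupp
  rw [f, ← key]
  apply tsum_congr
  intro p
  have h1 : (k + p * n) % n = k := by
    rw [Nat.add_mul_mod_self_right, Nat.mod_eq_of_lt hk]
  have h2 : (k + p * n) / n = p := by
    rw [Nat.add_mul_div_right _ _ hn, Nat.div_eq_of_lt hk, zero_add]
  simp [c, h1, h2]

/-- Euclidean bookkeeping for the sum of two numbers mod `n`. -/
lemma euclid (n : ℕ) (hn : 0 < n) (i j : ℕ) :
    (i % n + j % n < n ∧ (i + j) % n = i % n + j % n ∧ (i + j) / n = i / n + j / n) ∨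
    (n ≤ i % n + j % n ∧ (i + j) % n + n = i % n + j % n ∧
      (i + j) / n = i / n + j / n + 1) := by
  have hi := Nat.div_add_mod i n
  have hj := Nat.div_add_mod j n
  have e : i + j = (i % n + j % n) + (i / n + j / n) * n := by
    conv_lhs => rw [← hi, ← hj]
    ring
  rcases lt_or_ge (i % n + j % n) n with h | h
  · left
    refine ⟨h, ?_, ?_⟩
    · rw [e, Nat.add_mul_mod_self_right, Nat.mod_eq_of_lt h]
    · rw [e, Nat.add_mul_div_right _ _ hn, Nat.div_eq_of_lt h, zero_add]
  · right
    obtain ⟨s, hs⟩ : ∃ s, i % n + j % n = s + n := ⟨i % n + j % n - n, by omega⟩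
    have hs' : s < n := by
      have h2 : j % n < n := Nat.mod_lt _ hn
      have h1 : i % n < n := Nat.mod_lt _ hn
      omega
    have e2 : i + j = s + (i / n + j / n + 1) * n := by rw [e, hs]; ring
    refine ⟨h, ?_, ?_⟩
    · rw [e2, Nat.add_mul_mod_self_right, Nat.mod_eq_of_lt hs']
      omega
    · rw [e2, Nat.add_mul_div_right _ _ hn, Nat.div_eq_of_lt hs', zero_add]

/-- The key combinatorial identity for the coefficients. -/
lemma key (n k : ℕ) (hn : 0 < n) (hk : k < n) (i j : ℕ) :
    c n k (i + j) =
      (∑ t ∈ Finset.range (k + 1), c n t i * c n (k - t) j) -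
      ∑ t ∈ Finset.Ico (k + 1) n, c n t i * c n (n + k - t) j := by
  have hri : i % n < n := Nat.mod_lt _ hn
  have hrj : j % n < n := Nat.mod_lt _ hn
  have h1 : ∑ t ∈ Finset.range (k + 1), c n t i * c n (k - t) j
      = if i % n ≤ k then (-1 : ℝ) ^ (i / n) * c n (k - i % n) j else 0 := by
    simp only [c, ite_mul, zero_mul]
    rw [Finset.sum_ite_eq]
    exact if_congr (by simp [Nat.lt_succ_iff]) rfl rfl
  have h2 : ∑ t ∈ Finset.Ico (k + 1) n, c n t i * c n (n + k - t) j
      = if k < i % n then (-1 : ℝ) ^ (i / n) * c n (n + k - i % n) j else 0 := by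
    simp only [c, ite_mul, zero_mul]
    rw [Finset.sum_ite_eq]
    exact if_congr (by simp [Finset.mem_Ico, Nat.succ_le_iff, hri]) rfl rfl
  rcases le_or_gt (i % n) k with h | h
  · rw [h1, if_pos h, h2, if_neg (not_lt.mpr h), sub_zero]
    simp only [c]
    rcases euclid n hn i j with ⟨hlt, hmod, hdiv⟩ | ⟨hge, hmod, hdiv⟩
    · by_cases hj : j % n = k - i % n
      · rw [if_pos hj, if_pos (by omega), hdiv, pow_add]
      · rw [if_neg hj, if_neg (by omega), mul_zero]
    · have hj : j % n ≠ k - i % n := by omega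
      rw [if_neg hj, if_neg (by omega), mul_zero]
  · rw [h1, if_neg (not_le.mpr h), h2, if_pos h, zero_sub]
    simp only [c]
    rcases euclid n hn i j with ⟨hlt, hmod, hdiv⟩ | ⟨hge, hmod, hdiv⟩
    · have hj : j % n ≠ n + k - i % n := by omega
      rw [if_neg hj, if_neg (by omega), mul_zero, neg_zero]
    · by_cases hj : j % n = n + k - i % n
      · rw [if_pos hj, if_pos (by omega), hdiv]
        rw [pow_add, pow_add, pow_one]
        ring
      · rw [if_neg hj, if_neg (by omega), mul_zero, neg_zero]

end PlanarAux

open PlanarAux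
theorem planar_cosexp_addition (n : ℕ) (hn : 1 ≤ n) (k : ℕ) (hk : k ≤ n - 1) (y z : ℝ) :
    f n k (y + z) =
      ∑ j ∈ Finset.range (k + 1), f n j y * f n (k - j) z -
      ∑ j ∈ Finset.Ico (k + 1) n, f n j y * f n (n + k - j) z := by
  have hn0 : 0 < n := hn
  have hk' : k < n := by omega
  set A : ℕ → ℕ → ℝ := fun t m => c n t m * y ^ m / (m)! with hA
  set B : ℕ → ℕ → ℝ := fun t m => c n t m * z ^ m / (m)! with hB
  -- each product of f's is a Cauchy product
  have hprod : ∀ t t' : ℕ, t < n → t' < n →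
      f n t y * f n t' z =
        ∑' s, ∑ p ∈ Finset.HasAntidiagonal.antidiagonal s, A t p.1 * B t' p.2 := by
    intro t t' ht ht'
    rw [f_eq n t hn0 ht y, f_eq n t' hn0 ht' z]
    exact tsum_mul_tsum_eq_tsum_sum_antidiagonal_of_summable_norm
      (summable_norm n t y) (summable_norm n t' z)
  have hsum1 : ∀ t t' : ℕ,
      Summable fun s => ∑ p ∈ Finset.HasAntidiagonal.antidiagonal s, A t p.1 * B t' p.2 := by
    intro t t'
    exact (summable_norm_sum_mul_antidiagonal_of_summable_norm
      (summable_norm n t y) (summable_norm n t' z)).of_norm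
  have e1 : ∑ j ∈ Finset.range (k + 1), f n j y * f n (k - j) z =
      ∑' s, ∑ j ∈ Finset.range (k + 1),
        ∑ p ∈ Finset.HasAntidiagonal.antidiagonal s, A j p.1 * B (k - j) p.2 := by
    rw [Summable.tsum_finsetSum (fun j _ => hsum1 j (k - j))]
    exact Finset.sum_congr rfl fun j hj => by
      rw [hprod j (k - j) (by simp at hj; omega) (by omega)]
  have e2 : ∑ j ∈ Finset.Ico (k + 1) n, f n j y * f n (n + k - j) z =
      ∑' s, ∑ j ∈ Finset.Ico (k + 1) n,
        ∑ p ∈ Finset.HasAntidiagonal.antidiagonal s, A j p.1 * B (n + k - j) p.2 := by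
    rw [Summable.tsum_finsetSum (fun j _ => hsum1 j (n + k - j))]
    exact Finset.sum_congr rfl fun j hj => by
      rw [hprod j (n + k - j) (by simp [Finset.mem_Ico] at hj; omega)
        (by simp [Finset.mem_Ico] at hj; omega)]
  rw [e1, e2, ← Summable.tsum_sub
    (summable_sum fun j _ => hsum1 j (k - j))
    (summable_sum fun j _ => hsum1 j (n + k - j)),
    f_eq n k hn0 hk' (y + z)]
  apply tsum_congr
  intro s
  -- expand the binomial on the left
  rw [Finset.sum_comm (s := Finset.range (k + 1)),
      Finset.sum_comm (s := Finset.Ico (k + 1) n), ← Finset.sum_sub_distrib]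
  have hlhs : c n k s * (y + z) ^ s / (s)! =
      ∑ p ∈ Finset.HasAntidiagonal.antidiagonal s,
        c n k s * ((s).choose p.1 * (y ^ p.1 * z ^ p.2)) / (s)! := by
    rw [add_pow]
    rw [← Finset.Nat.sum_antidiagonal_eq_sum_range_succ
      (f := fun i j => y ^ i * z ^ j * ((s).choose i : ℝ))]
    rw [Finset.mul_sum, Finset.sum_div]
    exact Finset.sum_congr rfl fun p _ => by ring
  rw [hlhs]
  apply Finset.sum_congr rfl
  intro p hp
  obtain ⟨i, j⟩ := p
  simp only [Finset.HasAntidiagonal.mem_antidiagonal] at hp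
  subst hp
  -- rewrite each summand and pull out common factor
  have hA' : ∀ t t' : ℕ, A t i * B t' j =
      c n t i * c n t' j * (y ^ i * z ^ j / ((i)! * (j)!)) := by
    intro t t'
    simp only [hA, hB]
    ring
  simp only [hA']
  rw [← Finset.sum_mul, ← Finset.sum_mul, ← sub_mul, ← key n k hn0 hk' i j]
  have hfac : (((i + j).choose i : ℝ)) * ((i)! * (j)!) = ((i + j)! : ℝ) := by
    have := Nat.choose_mul_factorial_mul_factorial (Nat.le_add_right i j)
    rw [Nat.add_sub_cancel_left] at this
    exact_mod_cast by rw [← this]; ring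
  have h1 : ((i)! : ℝ) ≠ 0 := by positivity
  have h2 : ((j)! : ℝ) ≠ 0 := by positivity
  have h3 : (((i + j))! : ℝ) ≠ 0 := by positivity
  field_simp
  rw [← hfac]
  ring
end
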